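/- If ℓ(v) is contained in ℓ(u) (i.e., ℓ(v) is the nested label of some descendant of u in possibly another network), then v is equivalent to some descendant of u; moreover, ℓ(v) is an element of the multiset ℓ(u) if and only if ℓ(v) is the nested label of some child of u. -/

import Mathlib

open scoped Classical

/-- A finite directed acyclic graph whose leaves are (injectively) labeled in `S`. -/
structure LDag (S : Type) : Type 1 where
  V : Type
  fin : Fintype V
  adj : V → V → Prop
  acyclic : WellFounded (fun a b => adj b a)
  lab : V → S
  labInj : ∀ u v : V, (∀ w, ¬ adj u w) → (∀ w, ¬ adj v w) → lab u = lab v → u = v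

attribute [instance] LDag.fin

namespace LDag

variable {S : Type}

/-- A leaf is a node with no children. -/
def IsLeaf (N : LDag S) (v : N.V) : Prop := ∀ w, ¬ N.adj v w

/-- `v` is a descendant of `u` (every node is a descendant of itself). -/
def Desc (N : LDag S) (u v : N.V) : Prop := Relation.ReflTransGen N.adj u v

/-- The cluster of `u`: the set of labels of the leaves that are descendants of `u`. -/
def cluster (N : LDag S) (u : N.V) : Set S :=
  {s | ∃ v, N.Desc u v ∧ N.IsLeaf v ∧ N.lab v = s}

/-- A tree node: a node with at most one parent. -/
def TreeNode (N : LDag S) (v : N.V) : Prop :=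
  ∀ p q, N.adj p v → N.adj q v → p = q

/-- A root: a node with no parents. -/
def IsRoot (N : LDag S) (r : N.V) : Prop := ∀ u, ¬ N.adj u r

/-- Tree-child: every internal node has a child that is a tree node. -/
def TreeChild (N : LDag S) : Prop :=
  ∀ v, ¬ N.IsLeaf v → ∃ w, N.adj v w ∧ N.TreeNode w

/-- `PathN N u v k`: there is a directed path of length `k` from `u` to `v`. -/
inductive PathN (N : LDag S) : N.V → N.V → ℕ → Prop
  | refl (v : N.V) : PathN N v v 0
  | cons {u v w : N.V} {k : ℕ} : N.adj u v → PathN N v w k → PathN N u w (k + 1)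

/-- The height of a node: the largest length of a directed path from it to a leaf. -/
noncomputable def height (N : LDag S) (v : N.V) : ℕ :=
  sSup {k | ∃ s, N.IsLeaf s ∧ PathN N v s k}

/-- Node equivalence between (possibly equal) labeled DAGs, defined recursively:
two leaves with the same label are equivalent, and two internal nodes are equivalent
when their children can be matched into equivalent pairs. -/
noncomputable def equivTo (N1 N2 : LDag S) : N1.V → N2.V → Prop :=
  N1.acyclic.fix (fun u ih v =>
    (N1.IsLeaf u ∧ N2.IsLeaf v ∧ N1.lab u = N2.lab v) ∨
    (¬ N1.IsLeaf u ∧ ¬ N2.IsLeaf v ∧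
      ∃ f : {w // N1.adj u w} ≃ {w // N2.adj v w},
        ∀ w : {w // N1.adj u w}, ih w.1 w.2 (f w).1))

end LDag

/-- Pre-nested labels: finitely branching trees of labels (multisets are obtained
as a quotient by `NEq` below). -/
inductive PreNested (S : Type) : Type
  | leaf : S → PreNested S
  | node : List (PreNested S) → PreNested S

/-- Equality of pre-nested labels as nested multisets. -/
inductive NEq {S : Type} : PreNested S → PreNested S → Prop
  | leaf (a : S) : NEq (.leaf a) (.leaf a)
  | node {l m : List (PreNested S)} : List.Forall₂ NEq l m → NEq (.node l) (.node m)
  | perm {l m : List (PreNested S)} : l.Perm m → NEq (.node l) (.node m)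
  | symm {a b : PreNested S} : NEq a b → NEq b a
  | trans {a b c : PreNested S} : NEq a b → NEq b c → NEq a c

mutual
  theorem NEq.refl {S : Type} : ∀ a : PreNested S, NEq a a
    | .leaf s => .leaf s
    | .node l => .node (NEq.reflL l)
  theorem NEq.reflL {S : Type} : ∀ l : List (PreNested S), List.Forall₂ NEq l l
    | [] => .nil
    | a :: l => .cons (NEq.refl a) (NEq.reflL l)
end

instance PreNested.setoid (S : Type) : Setoid (PreNested S) :=
  ⟨NEq, ⟨NEq.refl, fun h => h.symm, fun h1 h2 => h1.trans h2⟩⟩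

/-- Nested multisets (of multisets of ...) of labels. -/
def Nested (S : Type) : Type := Quotient (PreNested.setoid S)

/-- `TaxaIn s p`: the taxon `s` occurs somewhere (at any nesting depth) in `p`. -/
inductive TaxaIn {S : Type} : S → PreNested S → Prop
  | leaf (s : S) : TaxaIn s (.leaf s)
  | node {s : S} {p : PreNested S} {l : List (PreNested S)} :
      p ∈ l → TaxaIn s p → TaxaIn s (.node l)

mutual
  /-- Nesting depth of a pre-nested label: a singleton `{s}` has depth 1. -/
  def depthP {S : Type} : PreNested S → ℕ
    | .leaf _ => 1
    | .node l => depthL l + 1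
  def depthL {S : Type} : List (PreNested S) → ℕ
    | [] => 0
    | p :: ps => max (depthP p) (depthL ps)
end

namespace LDag

variable {S : Type}

/-- The nested label of a node: the singleton of its label for a leaf, and the
multiset of the nested labels of its children otherwise. -/
noncomputable def nested (N : LDag S) : N.V → Nested S :=
  N.acyclic.fix (fun v ih =>
    if h : N.IsLeaf v then (⟦PreNested.leaf (N.lab v)⟧ : Nested S)
    else ⟦PreNested.node (((Finset.univ.filter (fun w => N.adj v w)).attach.toList).map
        (fun w => (ih w.1 (Finset.mem_filter.mp w.2).2).out))⟧)

/-- `Υ(N)`: the multiset of equivalence classes (= nested labels) of the nodes of `N`,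
with multiplicities. -/
noncomputable def UpsilonM (N : LDag S) : Multiset (Nested S) :=
  Finset.univ.val.map N.nested

/-- Label-preserving isomorphisms of labeled DAGs. -/
structure Iso (N1 N2 : LDag S) where
  toEquiv : N1.V ≃ N2.V
  adj_iff : ∀ u v : N1.V, N2.adj (toEquiv u) (toEquiv v) ↔ N1.adj u v
  lab_leaf : ∀ v : N1.V, N1.IsLeaf v → N2.lab (toEquiv v) = N1.lab v

def IsIso (N1 N2 : LDag S) : Prop := Nonempty (Iso N1 N2)

theorem Iso.leaf_map {N1 N2 : LDag S} (e : Iso N1 N2) {v : N1.V} (h : N1.IsLeaf v) :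
    N2.IsLeaf (e.toEquiv v) := by
  intro w hw
  have hw' : N2.adj (e.toEquiv v) (e.toEquiv (e.toEquiv.symm w)) := by simpa using hw
  exact h _ ((e.adj_iff _ _).mp hw')

def Iso.refl (N : LDag S) : Iso N N :=
  ⟨Equiv.refl _, fun _ _ => Iff.rfl, fun _ _ => rfl⟩

def Iso.symm {N1 N2 : LDag S} (e : Iso N1 N2) : Iso N2 N1 where
  toEquiv := e.toEquiv.symm
  adj_iff u v := by rw [← e.adj_iff]; simp
  lab_leaf v hv := by
    have h1 : N1.IsLeaf (e.toEquiv.symm v) := by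
      intro w hw
      have : N2.adj v (e.toEquiv w) := by
        have := (e.adj_iff (e.toEquiv.symm v) w).mpr hw
        simpa using this
      exact hv _ this
    have := e.lab_leaf _ h1
    simpa using this.symm

def Iso.trans {N1 N2 N3 : LDag S} (e : Iso N1 N2) (f : Iso N2 N3) : Iso N1 N3 where
  toEquiv := e.toEquiv.trans f.toEquiv
  adj_iff u v := by
    simp only [Equiv.trans_apply]
    rw [f.adj_iff, e.adj_iff]
  lab_leaf v hv := by
    simp only [Equiv.trans_apply]
    rw [f.lab_leaf _ (e.leaf_map hv), e.lab_leaf _ hv]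

instance isoSetoid (S : Type) : Setoid (LDag S) :=
  ⟨IsIso, ⟨fun N => ⟨Iso.refl N⟩, fun ⟨e⟩ => ⟨e.symm⟩, fun ⟨e⟩ ⟨f⟩ => ⟨e.trans f⟩⟩⟩

/-- Isomorphism classes of labeled DAGs. -/
def IsoClass (S : Type) : Type 1 := Quotient (isoSetoid S)

/-- The rooted subnetwork `N(u)` generated by a node `u`: the induced subgraph on
the set of descendants of `u`. -/
noncomputable def subnet (N : LDag S) (u : N.V) : LDag S where
  V := {v // N.Desc u v}
  fin := Subtype.fintype _
  adj a b := N.adj a.1 b.1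
  acyclic := by
    have h : (fun (a b : {v // N.Desc u v}) => N.adj b.1 a.1) =
        InvImage (fun a b => N.adj b a) Subtype.val := rfl
    rw [h]
    exact InvImage.wf _ N.acyclic
  lab v := N.lab v.1
  labInj := by
    intro a b ha hb hlab
    apply Subtype.ext
    refine N.labInj a.1 b.1 ?_ ?_ hlab
    · intro w hw
      exact ha ⟨w, a.2.trans (Relation.ReflTransGen.single hw)⟩ hw
    · intro w hw
      exact hb ⟨w, b.2.trans (Relation.ReflTransGen.single hw)⟩ hw

/-- `Σ(N)`: the multiset of isomorphism classes of the rooted subnetworks generated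
by the nodes of `N`, with multiplicities. -/
noncomputable def SigmaM (N : LDag S) : Multiset (IsoClass S) :=
  Finset.univ.val.map (fun u => (Quotient.mk (isoSetoid S) (N.subnet u) : IsoClass S))

/-- Nakhleh's dissimilarity `m(N1,N2) = |Υ(N1) △ Υ(N2)| / 2`. -/
noncomputable def mDist (N1 N2 : LDag S) : ℝ :=
  (((N1.UpsilonM - N2.UpsilonM) + (N2.UpsilonM - N1.UpsilonM)).card : ℝ) / 2

/-- The distance `σ(N1,N2) = |Σ(N1) △ Σ(N2)| / 2`. -/
noncomputable def sigmaDist (N1 N2 : LDag S) : ℝ :=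
  (((N1.SigmaM - N2.SigmaM) + (N2.SigmaM - N1.SigmaM)).card : ℝ) / 2

end LDag

/-- An `S`-DAG: a labeled DAG whose leaves are bijectively labeled by `S`. -/
structure SDag (S : Type) extends LDag S where
  surjLab : ∀ s : S, ∃ v, toLDag.IsLeaf v ∧ toLDag.lab v = s

/-- A phylogenetic network on `S`: a rooted `S`-DAG. -/
structure PhyloNetwork (S : Type) extends SDag S where
  rooted : ∃! r, toLDag.IsRoot r

/-!
Equality of pre-nested labels is generated by congruence, permutation of entries, symmetry and
transitivity, and each generator preserves the root of a label: the taxon of a leaf, or the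
multiset of classes of the entries of a node. Hence a nested label determines whether a node is a
leaf and, if so, its label, and otherwise the multiset of the nested labels of its children. Two
nodes with equal nested labels therefore have children whose labels agree fibre by fibre, so the
children can be matched bijectively into pairs with equal labels, which are equivalent by
well-founded induction. The elements of `ℓ(u)` are read off the same root.
-/

theorem Fintype.exists_equiv_of_map_univ_eq {α β γ : Type*} [Fintype α] [Fintype β]
    {f : α → γ} {g : β → γ} (h : Finset.univ.val.map f = Finset.univ.val.map g) :
    ∃ e : α ≃ β, ∀ a, g (e a) = f a := by
  classical
  have hfiber : ∀ c, Fintype.card {a // f a = c} = Fintype.card {b // g b = c} := fun c => by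
    have := congrArg (Multiset.count c) h
    simp only [Multiset.count_map, eq_comm (a := c)] at this
    simpa only [Fintype.card_subtype, Finset.card_def, Finset.filter_val] using this
  exact ⟨Equiv.ofFiberEquiv fun c => Fintype.equivOfCardEq (hfiber c),
    Equiv.ofFiberEquiv_map _⟩

namespace PreNested

variable {S : Type}

/-- The root of a pre-nested label: its taxon, or the multiset of the classes of its entries. -/
def shape : PreNested S → S ⊕ Multiset (Nested S)
  | leaf s => .inl s
  | node l => .inr ((l.map (Quotient.mk (PreNested.setoid S)) : List (Nested S)) : Multiset _)

end PreNested

theorem NEq.shape_eq {S : Type} {a b : PreNested S} (h : NEq a b) : a.shape = b.shape := by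
  induction h using NEq.rec
    (motive_2 := fun l m _ =>
      (l.map (Quotient.mk (PreNested.setoid S)) : List (Nested S)) =
        m.map (Quotient.mk (PreNested.setoid S))) with
  | leaf s => rfl
  | node _ ih =>
    exact congrArg (fun m : List (Nested S) => (Sum.inr m : S ⊕ Multiset (Nested S))) ih
  | perm hp => exact congrArg Sum.inr (Multiset.coe_eq_coe.mpr (hp.map _))
  | symm _ ih => exact ih.symm
  | trans _ _ ih₁ ih₂ => exact ih₁.trans ih₂
  | nil => rfl
  | cons h _ _ ih => exact congrArg₂ (@List.cons (Nested S)) (Quotient.sound h) ih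

namespace Nested

variable {S : Type}

def shape : Nested S → S ⊕ Multiset (Nested S) :=
  Quotient.lift PreNested.shape fun _ _ => NEq.shape_eq

/-- The elements of a nested label as a multiset; a leaf label `{s}` has none, since its
element `s` is a taxon, not a nested label. -/
def children (x : Nested S) : Multiset (Nested S) :=
  x.shape.elim (fun _ => 0) id

theorem mem_children_iff {x y : Nested S} :
    y ∈ x.children ↔ ∃ (p : PreNested S) (l : List (PreNested S)),
        x = Quotient.mk (PreNested.setoid S) (PreNested.node l) ∧
        p ∈ l ∧ Quotient.mk (PreNested.setoid S) p = y := by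
  constructor
  · induction x using Quotient.inductionOn with
    | h q =>
      cases q with
      | leaf s => simp [children, shape, PreNested.shape]
      | node l =>
        intro hy
        obtain ⟨p, hp, rfl⟩ := List.mem_map.mp (Multiset.mem_coe.mp hy)
        exact ⟨p, l, rfl, hp, rfl⟩
  · rintro ⟨p, l, rfl, hp, rfl⟩
    exact Multiset.mem_coe.mpr (List.mem_map_of_mem hp)

end Nested

namespace LDag

variable {S : Type} (N : LDag S)

noncomputable def childNested (v : N.V) : Multiset (Nested S) :=
  Finset.univ.val.map fun w : {w // N.adj v w} => N.nested w

theorem childNested_eq_map_filter (v : N.V) :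
    N.childNested v = (Finset.univ.filter (N.adj v)).val.map N.nested :=
  Finset.univ_val_map_subtype_restrict N.nested (N.adj v)

theorem mem_childNested_iff {v : N.V} {x : Nested S} :
    x ∈ N.childNested v ↔ ∃ w, N.adj v w ∧ N.nested w = x := by
  simp [childNested]

theorem nested_eq (v : N.V) :
    N.nested v = if _ : N.IsLeaf v then ⟦PreNested.leaf (N.lab v)⟧
      else ⟦PreNested.node (((Finset.univ.filter (N.adj v)).attach.toList).map
        fun w => (N.nested w.1).out)⟧ :=
  WellFounded.fix_eq _ _ v

theorem shape_nested_of_isLeaf {v : N.V} (hv : N.IsLeaf v) :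
    (N.nested v).shape = .inl (N.lab v) := by
  rw [nested_eq, dif_pos hv]
  rfl

theorem shape_nested_of_not_isLeaf {v : N.V} (hv : ¬ N.IsLeaf v) :
    (N.nested v).shape = .inr (N.childNested v) := by
  rw [nested_eq, dif_neg hv, childNested_eq_map_filter]
  refine congrArg Sum.inr ?_
  have hout : Quotient.mk (PreNested.setoid S) ∘
      (fun w : Finset.univ.filter (N.adj v) => (N.nested w.1).out) = fun w => N.nested w.1 :=
    funext fun w => (N.nested w.1).out_eq
  -- `erw`: the list in `nested` is typed over `Quotient (PreNested.setoid S)`, not `Nested S`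
  erw [List.map_map, hout]
  rw [← Multiset.map_coe, Finset.coe_toList, Finset.attach_val]
  exact Multiset.attach_map_val' _ _

theorem children_nested (v : N.V) : (N.nested v).children = N.childNested v := by
  by_cases hv : N.IsLeaf v
  · have : IsEmpty {w // N.adj v w} := ⟨fun w => hv w w.2⟩
    simp [Nested.children, N.shape_nested_of_isLeaf hv, childNested]
  · simp [Nested.children, N.shape_nested_of_not_isLeaf hv]

theorem equivTo_iff (N₁ N₂ : LDag S) (u : N₁.V) (v : N₂.V) :
    N₁.equivTo N₂ u v ↔
      (N₁.IsLeaf u ∧ N₂.IsLeaf v ∧ N₁.lab u = N₂.lab v) ∨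
      (¬ N₁.IsLeaf u ∧ ¬ N₂.IsLeaf v ∧
        ∃ f : {w // N₁.adj u w} ≃ {w // N₂.adj v w},
          ∀ w : {w // N₁.adj u w}, N₁.equivTo N₂ w (f w)) := by
  rw [equivTo, WellFounded.fix_eq]

theorem equivTo_of_nested_eq {N₁ N₂ : LDag S} {u : N₁.V} {v : N₂.V}
    (huv : N₁.nested u = N₂.nested v) : N₁.equivTo N₂ u v := by
  induction u using WellFounded.induction N₁.acyclic generalizing v with
  | _ u ih =>
    have hshape := congrArg Nested.shape huv
    rw [equivTo_iff]
    by_cases hu : N₁.IsLeaf u <;> by_cases hv : N₂.IsLeaf v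
    · rw [N₁.shape_nested_of_isLeaf hu, N₂.shape_nested_of_isLeaf hv] at hshape
      exact .inl ⟨hu, hv, Sum.inl.inj hshape⟩
    · rw [N₁.shape_nested_of_isLeaf hu, N₂.shape_nested_of_not_isLeaf hv] at hshape
      cases hshape
    · rw [N₁.shape_nested_of_not_isLeaf hu, N₂.shape_nested_of_isLeaf hv] at hshape
      cases hshape
    · rw [N₁.shape_nested_of_not_isLeaf hu, N₂.shape_nested_of_not_isLeaf hv] at hshape
      obtain ⟨e, he⟩ := Fintype.exists_equiv_of_map_univ_eq (Sum.inr.inj hshape)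
      exact .inr ⟨hu, hv, e, fun w => ih w w.2 (he w).symm⟩

end LDag

/-- If the nested label of `v` is contained in the nested label of `u` (it is the
nested label of some descendant of `u`), then `v` is equivalent to some descendant of
`u`; moreover `ℓ(v)` is an element of the multiset `ℓ(u)` iff `ℓ(v)` is the nested
label of some child of `u`. -/
theorem nested_containment {S : Type} (N1 N2 : SDag S) (u : N1.V) (v : N2.V) :
    ((∃ w, N1.toLDag.Desc u w ∧ N1.toLDag.nested w = N2.toLDag.nested v) →
      ∃ w, N1.toLDag.Desc u w ∧ N1.toLDag.equivTo N2.toLDag w v) ∧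
    ((∃ (p : PreNested S) (l : List (PreNested S)),
        N1.toLDag.nested u = Quotient.mk (PreNested.setoid S) (PreNested.node l) ∧
        p ∈ l ∧ Quotient.mk (PreNested.setoid S) p = N2.toLDag.nested v) ↔
      ∃ w, N1.adj u w ∧ N1.toLDag.nested w = N2.toLDag.nested v) := by
  refine ⟨fun ⟨w, hdesc, hw⟩ => ⟨w, hdesc, LDag.equivTo_of_nested_eq hw⟩, ?_⟩
  rw [← Nested.mem_children_iff, LDag.children_nested, LDag.mem_childNested_iff]
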